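/- Let F, Q be n_x×n_x real matrices, B an n_x×n_u real matrix, u ∈ ℝ^{n_u}, f ∈ ℝ^{n_x}, and z ∈ ℝ^{n_z} fixed. Define the one-step Kalman map T(x, P) := (x⁺, P⁺), where μ := F ·ᵥ x + B ·ᵥ u + f, P⁻ := F·P·Fᵀ + Q, S := H·P⁻·Hᵀ + R, K := P⁻·Hᵀ·S⁻¹, x⁺ := μ + K ·ᵥ (z − H ·ᵥ μ), and P⁺ := (I − K·H)·P⁻. Let (x₀, P₀) be such that S₀ := H·(F·P₀·Fᵀ + Q)·Hᵀ + R is invertible, and set P₀⁻ := F·P₀·Fᵀ + Q, K₀ := P₀⁻·Hᵀ·S₀⁻¹, μ₀ := F ·ᵥ x₀ + B ·ᵥ u + f. Then T is Fréchet differentiable at (x₀, P₀) with derivative the linear map (Δx, ΔP) ↦ ( (I − K₀·H)·F ·ᵥ Δx + ((I − K₀·H)·F·ΔP·Fᵀ·Hᵀ·S₀⁻¹) ·ᵥ (z − H ·ᵥ μ₀), (I − K₀·H)·F·ΔP·Fᵀ·(I − Hᵀ·S₀⁻¹·H·P₀⁻) ). -/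

import Mathlib

open Matrix

attribute [local instance] Matrix.normedAddCommGroup Matrix.normedSpace

/-!
The Kalman map factors as the affine prediction step `(x, P) ↦ (F x + B u + f, F P Fᵀ + Q)`
followed by the measurement update `(μ, M) ↦ (μ + K(M) (z - H μ), (1 - K(M) H) M)`, so the chain
rule reduces everything to the derivative of the gain `K(M) = M Hᵀ S(M)⁻¹`. Differentiating
`S⁻¹` as `ΔS ↦ -S⁻¹ ΔS S⁻¹` gives `dK(ΔM) = (1 - K H) ΔM Hᵀ S⁻¹`; the product rule then yields the
factor `1 - K H` in front of every term, and `(1 - K H) ΔM - dK(ΔM) H M` factors as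
`(1 - K H) ΔM (1 - Hᵀ S⁻¹ H M)`.
-/

open Filter Topology Asymptotics

namespace Matrix

variable {𝕜 : Type*} [NontriviallyNormedField 𝕜] [CompleteSpace 𝕜]
  {l m n : Type*} [Fintype l] [Fintype m] [Fintype n]

variable (𝕜) in
noncomputable def mulCLM : Matrix l m 𝕜 →L[𝕜] Matrix m n 𝕜 →L[𝕜] Matrix l n 𝕜 :=
  LinearMap.toContinuousLinearMap
    (LinearMap.toContinuousLinearMap.toLinearMap ∘ₗ mulLinearMap 𝕜)

@[simp]
theorem mulCLM_apply (A : Matrix l m 𝕜) (B : Matrix m n 𝕜) : mulCLM 𝕜 A B = A * B := rfl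

noncomputable def mulRightCLM (B : Matrix m n 𝕜) : Matrix l m 𝕜 →L[𝕜] Matrix l n 𝕜 :=
  LinearMap.toContinuousLinearMap (mulRightLinearMap l 𝕜 B)

omit [Fintype n] in
@[simp]
theorem mulRightCLM_apply (B : Matrix m n 𝕜) (A : Matrix l m 𝕜) : mulRightCLM B A = A * B := rfl

variable (𝕜) in
noncomputable def mulVecCLM : Matrix m n 𝕜 →L[𝕜] (n → 𝕜) →L[𝕜] m → 𝕜 :=
  LinearMap.toContinuousLinearMap
    (LinearMap.toContinuousLinearMap.toLinearMap ∘ₗ mulVecBilin 𝕜 𝕜)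

noncomputable def mulVecRightCLM (v : n → 𝕜) : Matrix m n 𝕜 →L[𝕜] m → 𝕜 :=
  LinearMap.toContinuousLinearMap ((mulVecBilin 𝕜 𝕜).flip v)

theorem hasFDerivAt_inv [DecidableEq n] {A : Matrix n n 𝕜} (hA : IsUnit A) :
    HasFDerivAt (fun M : Matrix n n 𝕜 => M⁻¹) ((mulCLM 𝕜 (-A⁻¹)).comp (mulRightCLM A⁻¹)) A := by
  have hdet : A.det ≠ 0 := ((isUnit_iff_isUnit_det A).mp hA).ne_zero
  have hcont : ContinuousAt (fun M : Matrix n n 𝕜 => M⁻¹) A :=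
    continuousAt_matrix_inv A (by simpa only [Ring.inverse_eq_inv'] using continuousAt_inv₀ hdet)
  have hsmall : Tendsto (fun M : Matrix n n 𝕜 => A⁻¹ - M⁻¹) (𝓝 A) (𝓝 0) := by
    simpa only [sub_self] using tendsto_const_nhds.sub hcont (f := fun _ => A⁻¹)
  -- `M⁻¹ - A⁻¹ = M⁻¹ (A - M) A⁻¹`, so the remainder is a product of two factors that vanish at `A`
  have hrem : ∀ᶠ M in 𝓝 A, mulCLM 𝕜 (A⁻¹ - M⁻¹) (mulRightCLM A⁻¹ (M - A)) =
      M⁻¹ - A⁻¹ - ((mulCLM 𝕜 (-A⁻¹)).comp (mulRightCLM A⁻¹)) (M - A) := by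
    filter_upwards [(continuous_id.matrix_det.continuousAt).eventually_ne hdet] with M hMdet
    have hM_inv : M⁻¹ * M = 1 := nonsing_inv_mul M (isUnit_iff_ne_zero.mpr hMdet)
    have hA_inv : A * A⁻¹ = 1 := mul_nonsing_inv A (isUnit_iff_ne_zero.mpr hdet)
    simp only [mulCLM_apply, mulRightCLM_apply, neg_mul, ContinuousLinearMap.comp_apply,
      sub_mul, mul_sub, hA_inv]
    simp only [← Matrix.mul_assoc, hM_inv, Matrix.one_mul, Matrix.mul_one]
    abel
  refine .of_isLittleO (IsLittleO.congr' ?_ hrem EventuallyEq.rfl)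
  refine IsBigO.trans_isLittleO (g := fun M => ‖A⁻¹ - M⁻¹‖ * ‖mulRightCLM A⁻¹ (M - A)‖) ?_ ?_
  · exact (mulCLM 𝕜 (l := n) (m := n) (n := n)).isBoundedBilinearMap.isBigO_comp
  · have hprod := ((isLittleO_one_iff ℝ).2 hsmall).norm_left.mul_isBigO
      ((mulRightCLM A⁻¹).isBigO_comp (fun M => M - A) (𝓝 A)).norm_norm
    simp only [one_mul] at hprod
    exact hprod.of_norm_right

end Matrix

section Calculus

variable {𝕜 : Type*} [NontriviallyNormedField 𝕜] [CompleteSpace 𝕜]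
  {l m n : Type*} [Fintype l] [Fintype m] [Fintype n]
  {E : Type*} [NormedAddCommGroup E] [NormedSpace 𝕜 E] {x : E}

theorem HasFDerivAt.matrix_mul {f : E → Matrix l m 𝕜} {g : E → Matrix m n 𝕜}
    {f' : E →L[𝕜] Matrix l m 𝕜} {g' : E →L[𝕜] Matrix m n 𝕜}
    (hf : HasFDerivAt f f' x) (hg : HasFDerivAt g g' x) :
    HasFDerivAt (fun y => f y * g y) ((mulCLM 𝕜 (f x)).comp g' + (mulRightCLM (g x)).comp f') x :=
  (mulCLM 𝕜).hasFDerivAt_of_bilinear hf hg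

theorem HasFDerivAt.matrix_mulVec {f : E → Matrix m n 𝕜} {g : E → n → 𝕜}
    {f' : E →L[𝕜] Matrix m n 𝕜} {g' : E →L[𝕜] n → 𝕜}
    (hf : HasFDerivAt f f' x) (hg : HasFDerivAt g g' x) :
    HasFDerivAt (fun y => f y *ᵥ g y)
      ((mulVecCLM 𝕜 (f x)).comp g' + (mulVecRightCLM (g x)).comp f') x :=
  (mulVecCLM 𝕜).hasFDerivAt_of_bilinear hf hg

theorem HasFDerivAt.const_matrix_mul (A : Matrix l m 𝕜) {f : E → Matrix m n 𝕜}
    {f' : E →L[𝕜] Matrix m n 𝕜} (hf : HasFDerivAt f f' x) :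
    HasFDerivAt (fun y => A * f y) ((mulCLM 𝕜 A).comp f') x :=
  (mulCLM 𝕜 A).hasFDerivAt.comp x hf

theorem HasFDerivAt.matrix_mul_const {f : E → Matrix l m 𝕜} {f' : E →L[𝕜] Matrix l m 𝕜}
    (hf : HasFDerivAt f f' x) (B : Matrix m n 𝕜) :
    HasFDerivAt (fun y => f y * B) ((mulRightCLM B).comp f') x :=
  (mulRightCLM (l := l) B).hasFDerivAt.comp x hf

theorem HasFDerivAt.const_matrix_mulVec (A : Matrix m n 𝕜) {f : E → n → 𝕜}
    {f' : E →L[𝕜] n → 𝕜} (hf : HasFDerivAt f f' x) :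
    HasFDerivAt (fun y => A *ᵥ f y) ((mulVecCLM 𝕜 A).comp f') x :=
  (mulVecCLM 𝕜 A).hasFDerivAt.comp x hf

theorem HasFDerivAt.matrix_inv [DecidableEq n] {f : E → Matrix n n 𝕜}
    {f' : E →L[𝕜] Matrix n n 𝕜} (hf : HasFDerivAt f f' x) (hx : IsUnit (f x)) :
    HasFDerivAt (fun y => (f y)⁻¹)
      (((mulCLM 𝕜 (-(f x)⁻¹)).comp (mulRightCLM (f x)⁻¹)).comp f') x :=
  (hasFDerivAt_inv hx).comp x hf

end Calculus

section Kalman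

variable {𝕜 : Type*} [NontriviallyNormedField 𝕜] [CompleteSpace 𝕜]
  {m p : Type*} [Fintype m] [DecidableEq m] [Fintype p] [DecidableEq p]
  (H : Matrix p m 𝕜) (R : Matrix p p 𝕜)

def innovationCov (M : Matrix m m 𝕜) : Matrix p p 𝕜 := H * M * Hᵀ + R

noncomputable def kalmanGain (M : Matrix m m 𝕜) : Matrix m p 𝕜 :=
  M * Hᵀ * (innovationCov H R M)⁻¹

noncomputable def kalmanUpdate (z : p → 𝕜) (μM : (m → 𝕜) × Matrix m m 𝕜) :
    (m → 𝕜) × Matrix m m 𝕜 :=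
  (μM.1 + kalmanGain H R μM.2 *ᵥ (z - H *ᵥ μM.1), (1 - kalmanGain H R μM.2 * H) * μM.2)

theorem hasFDerivAt_kalmanGain {M₀ : Matrix m m 𝕜} (hS : IsUnit (innovationCov H R M₀)) :
    HasFDerivAt (kalmanGain H R)
      ((mulCLM 𝕜 (1 - kalmanGain H R M₀ * H)).comp (mulRightCLM (Hᵀ * (innovationCov H R M₀)⁻¹)))
      M₀ := by
  have hM := hasFDerivAt_id (𝕜 := 𝕜) M₀
  have hS' := ((hM.const_matrix_mul H).matrix_mul_const Hᵀ).add_const R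
  have hK := (hM.matrix_mul_const Hᵀ).matrix_mul (hS'.matrix_inv hS)
  refine hK.congr_fderiv (ContinuousLinearMap.ext fun ΔM => ?_)
  set S := innovationCov H R M₀
  -- `simp` cannot evaluate these derivatives: the matrix-valued `→L` types carry the generic
  -- `Matrix` topology while `HasFDerivAt` uses the local sup-norm instance, so we evaluate by `change`
  change M₀ * Hᵀ * (-S⁻¹ * (H * ΔM * Hᵀ * S⁻¹)) + ΔM * Hᵀ * S⁻¹ =
    (1 - M₀ * Hᵀ * S⁻¹ * H) * (ΔM * (Hᵀ * S⁻¹))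
  simp only [Matrix.sub_mul, Matrix.one_mul, Matrix.neg_mul, Matrix.mul_neg, Matrix.mul_assoc]
  abel

theorem hasFDerivAt_kalmanUpdate (z : p → 𝕜) {μ₀ : m → 𝕜} {M₀ : Matrix m m 𝕜}
    (hS : IsUnit (innovationCov H R M₀)) :
    ∃ L : (m → 𝕜) × Matrix m m 𝕜 →L[𝕜] (m → 𝕜) × Matrix m m 𝕜,
      HasFDerivAt (kalmanUpdate H R z) L (μ₀, M₀) ∧
      ∀ Δμ ΔM, L (Δμ, ΔM) =
        ((1 - kalmanGain H R M₀ * H) *ᵥ Δμ +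
          ((1 - kalmanGain H R M₀ * H) * ΔM * Hᵀ * (innovationCov H R M₀)⁻¹) *ᵥ (z - H *ᵥ μ₀),
         (1 - kalmanGain H R M₀ * H) * ΔM * (1 - Hᵀ * (innovationCov H R M₀)⁻¹ * H * M₀)) := by
  have hμ := hasFDerivAt_fst (𝕜 := 𝕜) (p := (μ₀, M₀))
  have hM := hasFDerivAt_snd (𝕜 := 𝕜) (p := (μ₀, M₀))
  have hK := (hasFDerivAt_kalmanGain H R hS).comp (μ₀, M₀) hM
  have hmean := hμ.add (hK.matrix_mulVec ((hμ.const_matrix_mulVec H).const_sub z))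
  have hcov := ((hK.matrix_mul_const H).const_sub 1).matrix_mul hM
  refine ⟨_, hmean.prodMk hcov, fun Δμ ΔM => ?_⟩
  set K := kalmanGain H R M₀
  set S := innovationCov H R M₀
  change (Δμ + (K *ᵥ -(H *ᵥ Δμ) + ((1 - K * H) * (ΔM * (Hᵀ * S⁻¹))) *ᵥ (z - H *ᵥ μ₀)),
      (1 - K * H) * ΔM + -((1 - K * H) * (ΔM * (Hᵀ * S⁻¹)) * H) * M₀) = _
  refine Prod.ext ?_ ?_
  · simp only [sub_mulVec, one_mulVec, mulVec_neg, mulVec_mulVec, Matrix.mul_assoc]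
    abel
  · simp only [Matrix.mul_sub, Matrix.mul_one, Matrix.neg_mul, Matrix.mul_assoc]
    abel

end Kalman

theorem stmt_8_general (n_x n_z n_u : ℕ)
    (H : Matrix (Fin n_z) (Fin n_x) ℝ) (R : Matrix (Fin n_z) (Fin n_z) ℝ)
    (F Q : Matrix (Fin n_x) (Fin n_x) ℝ) (B : Matrix (Fin n_x) (Fin n_u) ℝ)
    (u : Fin n_u → ℝ) (f : Fin n_x → ℝ) (z : Fin n_z → ℝ)
    (x₀ : Fin n_x → ℝ) (P₀ : Matrix (Fin n_x) (Fin n_x) ℝ)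
    (P₀m : Matrix (Fin n_x) (Fin n_x) ℝ) (hP₀m : P₀m = F * P₀ * Fᵀ + Q)
    (S₀ : Matrix (Fin n_z) (Fin n_z) ℝ) (hS₀ : S₀ = H * P₀m * Hᵀ + R)
    (hS : IsUnit S₀)
    (K₀ : Matrix (Fin n_x) (Fin n_z) ℝ) (hK₀ : K₀ = P₀m * Hᵀ * S₀⁻¹)
    (μ₀ : Fin n_x → ℝ) (hμ₀ : μ₀ = F.mulVec x₀ + B.mulVec u + f) :
    ∃ L : ((Fin n_x → ℝ) × Matrix (Fin n_x) (Fin n_x) ℝ) →L[ℝ]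
        ((Fin n_x → ℝ) × Matrix (Fin n_x) (Fin n_x) ℝ),
      HasFDerivAt
        (fun xP : (Fin n_x → ℝ) × Matrix (Fin n_x) (Fin n_x) ℝ =>
          ((F.mulVec xP.1 + B.mulVec u + f) +
            ((F * xP.2 * Fᵀ + Q) * Hᵀ *
              (H * (F * xP.2 * Fᵀ + Q) * Hᵀ + R)⁻¹).mulVec
                (z - H.mulVec (F.mulVec xP.1 + B.mulVec u + f)),
           (1 - (F * xP.2 * Fᵀ + Q) * Hᵀ *
              (H * (F * xP.2 * Fᵀ + Q) * Hᵀ + R)⁻¹ * H) * (F * xP.2 * Fᵀ + Q)))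
        L (x₀, P₀) ∧
      ∀ (Δx : Fin n_x → ℝ) (ΔP : Matrix (Fin n_x) (Fin n_x) ℝ),
        L (Δx, ΔP) =
          (((1 - K₀ * H) * F).mulVec Δx +
            ((1 - K₀ * H) * F * ΔP * Fᵀ * Hᵀ * S₀⁻¹).mulVec (z - H.mulVec μ₀),
           (1 - K₀ * H) * F * ΔP * Fᵀ * (1 - Hᵀ * S₀⁻¹ * H * P₀m)) := by
  subst hP₀m hS₀ hK₀ hμ₀
  have hpredict :=
    (((hasFDerivAt_fst (p := (x₀, P₀))).const_matrix_mulVec F).add_const (B *ᵥ u)).add_const f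
      |>.prodMk (((hasFDerivAt_snd.const_matrix_mul F).matrix_mul_const Fᵀ).add_const Q)
  obtain ⟨L, hL, hL_apply⟩ := hasFDerivAt_kalmanUpdate H R z (μ₀ := F *ᵥ x₀ + B *ᵥ u + f) hS
  refine ⟨L.comp _, hL.comp (x₀, P₀) hpredict, fun Δx ΔP => ?_⟩
  change L (F *ᵥ Δx, F * ΔP * Fᵀ) = _
  rw [hL_apply]
  simp only [kalmanGain, innovationCov, mulVec_mulVec, Matrix.mul_assoc]

/-- The one-step Kalman map
`T(x, P) = (μ + K ·ᵥ (z − H ·ᵥ μ), (I − K·H)·P⁻)` with `μ = F ·ᵥ x + B ·ᵥ u + f`,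
`P⁻ = F·P·Fᵀ + Q`, `S = H·P⁻·Hᵀ + R`, `K = P⁻·Hᵀ·S⁻¹`, is Fréchet differentiable at
`(x₀, P₀)` (assuming `S₀` invertible) with derivative
`(Δx, ΔP) ↦ ((I − K₀·H)·F ·ᵥ Δx + ((I − K₀·H)·F·ΔP·Fᵀ·Hᵀ·S₀⁻¹) ·ᵥ (z − H ·ᵥ μ₀),
  (I − K₀·H)·F·ΔP·Fᵀ·(I − Hᵀ·S₀⁻¹·H·P₀⁻))`. -/
theorem stmt_8 (n_x n_z n_u : ℕ) (hnx : 0 < n_x) (hnz : 0 < n_z) (hnu : 0 < n_u)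
    (H : Matrix (Fin n_z) (Fin n_x) ℝ) (R : Matrix (Fin n_z) (Fin n_z) ℝ)
    (F Q : Matrix (Fin n_x) (Fin n_x) ℝ) (B : Matrix (Fin n_x) (Fin n_u) ℝ)
    (u : Fin n_u → ℝ) (f : Fin n_x → ℝ) (z : Fin n_z → ℝ)
    (x₀ : Fin n_x → ℝ) (P₀ : Matrix (Fin n_x) (Fin n_x) ℝ)
    (P₀m : Matrix (Fin n_x) (Fin n_x) ℝ) (hP₀m : P₀m = F * P₀ * Fᵀ + Q)
    (S₀ : Matrix (Fin n_z) (Fin n_z) ℝ) (hS₀ : S₀ = H * P₀m * Hᵀ + R)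
    (hS : IsUnit S₀)
    (K₀ : Matrix (Fin n_x) (Fin n_z) ℝ) (hK₀ : K₀ = P₀m * Hᵀ * S₀⁻¹)
    (μ₀ : Fin n_x → ℝ) (hμ₀ : μ₀ = F.mulVec x₀ + B.mulVec u + f) :
    ∃ L : ((Fin n_x → ℝ) × Matrix (Fin n_x) (Fin n_x) ℝ) →L[ℝ]
        ((Fin n_x → ℝ) × Matrix (Fin n_x) (Fin n_x) ℝ),
      HasFDerivAt
        (fun xP : (Fin n_x → ℝ) × Matrix (Fin n_x) (Fin n_x) ℝ =>
          ((F.mulVec xP.1 + B.mulVec u + f) +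
            ((F * xP.2 * Fᵀ + Q) * Hᵀ *
              (H * (F * xP.2 * Fᵀ + Q) * Hᵀ + R)⁻¹).mulVec
                (z - H.mulVec (F.mulVec xP.1 + B.mulVec u + f)),
           (1 - (F * xP.2 * Fᵀ + Q) * Hᵀ *
              (H * (F * xP.2 * Fᵀ + Q) * Hᵀ + R)⁻¹ * H) * (F * xP.2 * Fᵀ + Q)))
        L (x₀, P₀) ∧
      ∀ (Δx : Fin n_x → ℝ) (ΔP : Matrix (Fin n_x) (Fin n_x) ℝ),
        L (Δx, ΔP) =
          (((1 - K₀ * H) * F).mulVec Δx +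
            ((1 - K₀ * H) * F * ΔP * Fᵀ * Hᵀ * S₀⁻¹).mulVec (z - H.mulVec μ₀),
           (1 - K₀ * H) * F * ΔP * Fᵀ * (1 - Hᵀ * S₀⁻¹ * H * P₀m)) :=
  stmt_8_general n_x n_z n_u H R F Q B u f z x₀ P₀ P₀m hP₀m S₀ hS₀ hS K₀ hK₀ μ₀ hμ₀
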